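/- arXiv:2301.02276 — 4 statements merged into one kernel-verified Lean document; each statement's English description precedes it below -/
import Mathlib

section
/- Let H be a symmetric positive definite n×n real matrix and let A be a k×n matrix whose rows are distinct standard basis vectors e_i^T for i in an index set I of size k. Let P = I_n − A^T(AA^T)^† A, which equals the diagonal matrix with (i,i) entry 1 if i ∉ I and 0 if i ∈ I. Then H^{-1} − H^{-1}A^T(AH^{-1}A^T)^{-1}AH^{-1} = (PHP)^†, where † denotes the Moore–Penrose pseudoinverse. -/
open Matrix

/-- `M` satisfies the four Penrose equations for `B`, i.e. `M = B†`,
the Moore–Penrose pseudoinverse of `B`. -/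
def IsMoorePenroseInv {m : Type*} [Fintype m] [DecidableEq m]
    (B M : Matrix m m ℝ) : Prop :=
  B * M * B = B ∧ M * B * M = M ∧ (B * M)ᵀ = B * M ∧ (M * B)ᵀ = M * B

/-!
With `P = 1 - AᵀA` (an orthogonal projection because `AAᵀ = 1`) and
`M = H⁻¹ - H⁻¹Aᵀ(AH⁻¹Aᵀ)⁻¹AH⁻¹`, one checks `AM = 0` and `MAᵀ = 0`, hence `MP = PM = M`, and
then `M(PHP) = P = (PHP)M`. Since `P` is a symmetric idempotent, these two identities already
give the four Penrose equations. Invertibility of `AH⁻¹Aᵀ` comes from positive definiteness,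
as `Aᵀ` is injective.
-/

theorem IsMoorePenroseInv.of_mul_eq_of_mul_eq {m : Type*} [Fintype m] [DecidableEq m]
    {B M P : Matrix m m ℝ} (hBM : B * M = P) (hMB : M * B = P) (hP : Pᵀ = P)
    (hPB : P * B = B) (hPM : P * M = M) : IsMoorePenroseInv B M :=
  ⟨by rw [hBM, hPB], by rw [hMB, hPM], by rw [hBM, hP], by rw [hMB, hP]⟩

theorem mul_transpose_eq_one_of_eq_of_ite {l m R : Type*} [DecidableEq l] [Fintype m]
    [DecidableEq m] [CommRing R] {A : Matrix l m R} {e : l → m} (he : Function.Injective e)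
    (hA : A = of fun i j => if j = e i then 1 else 0) : A * Aᵀ = 1 := by
  subst hA
  ext i j
  simp [mul_apply, one_apply, he.eq_iff, eq_comm]

theorem transpose_one_sub_transpose_mul {l m R : Type*} [Fintype l] [DecidableEq m] [CommRing R]
    (A : Matrix l m R) : (1 - Aᵀ * A)ᵀ = 1 - Aᵀ * A := by
  rw [transpose_sub, transpose_one, transpose_mul, transpose_transpose]

section Projection

variable {l m R : Type*} [Fintype l] [DecidableEq l] [Fintype m] [DecidableEq m] [CommRing R]
  {A : Matrix l m R}

theorem mul_one_sub_transpose_mul (hA : A * Aᵀ = 1) : A * (1 - Aᵀ * A) = 0 := by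
  rw [Matrix.mul_sub, Matrix.mul_one, ← Matrix.mul_assoc, hA, Matrix.one_mul, sub_self]

theorem one_sub_transpose_mul_mul_transpose (hA : A * Aᵀ = 1) : (1 - Aᵀ * A) * Aᵀ = 0 := by
  rw [Matrix.sub_mul, Matrix.one_mul, Matrix.mul_assoc, hA, Matrix.mul_one, sub_self]

theorem one_sub_transpose_mul_idem (hA : A * Aᵀ = 1) :
    (1 - Aᵀ * A) * (1 - Aᵀ * A) = 1 - Aᵀ * A := by
  rw [Matrix.sub_mul 1, Matrix.one_mul, Matrix.mul_assoc Aᵀ, mul_one_sub_transpose_mul hA,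
    Matrix.mul_zero, sub_zero]

end Projection

section ConstrainedInverse

variable {l m R : Type*} [Fintype l] [DecidableEq l] [Fintype m] [DecidableEq m] [CommRing R]
  {H : Matrix m m R} {A : Matrix l m R}

/-- The upper left block of the inverse of the KKT matrix `!![H, Aᵀ; A, 0]`. -/
noncomputable def constrainedInv (H : Matrix m m R) (A : Matrix l m R) : Matrix m m R :=
  H⁻¹ - H⁻¹ * Aᵀ * (A * H⁻¹ * Aᵀ)⁻¹ * A * H⁻¹

theorem mul_constrainedInv_eq_zero (hS : IsUnit (A * H⁻¹ * Aᵀ).det) :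
    A * constrainedInv H A = 0 := by
  simp only [constrainedInv, Matrix.mul_sub, ← Matrix.mul_assoc, mul_nonsing_inv _ hS,
    Matrix.one_mul, sub_self]

theorem constrainedInv_mul_transpose_eq_zero (hS : IsUnit (A * H⁻¹ * Aᵀ).det) :
    constrainedInv H A * Aᵀ = 0 := by
  have hreassoc : H⁻¹ * Aᵀ * (A * H⁻¹ * Aᵀ)⁻¹ * A * H⁻¹ * Aᵀ
      = H⁻¹ * Aᵀ * ((A * H⁻¹ * Aᵀ)⁻¹ * (A * H⁻¹ * Aᵀ)) := by
    simp only [Matrix.mul_assoc]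
  rw [constrainedInv, Matrix.sub_mul, hreassoc, nonsing_inv_mul _ hS, Matrix.mul_one, sub_self]

theorem one_sub_transpose_mul_mul_constrainedInv (hS : IsUnit (A * H⁻¹ * Aᵀ).det) :
    (1 - Aᵀ * A) * constrainedInv H A = constrainedInv H A := by
  rw [Matrix.sub_mul, Matrix.one_mul, Matrix.mul_assoc, mul_constrainedInv_eq_zero hS,
    Matrix.mul_zero, sub_zero]

theorem constrainedInv_mul_one_sub_transpose_mul (hS : IsUnit (A * H⁻¹ * Aᵀ).det) :
    constrainedInv H A * (1 - Aᵀ * A) = constrainedInv H A := by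
  rw [Matrix.mul_sub, Matrix.mul_one, ← Matrix.mul_assoc,
    constrainedInv_mul_transpose_eq_zero hS, Matrix.zero_mul, sub_zero]

theorem constrainedInv_mul_self (hH : IsUnit H.det) :
    constrainedInv H A * H = 1 - H⁻¹ * Aᵀ * (A * H⁻¹ * Aᵀ)⁻¹ * A := by
  rw [constrainedInv, Matrix.sub_mul, nonsing_inv_mul _ hH, Matrix.mul_assoc _ H⁻¹ H,
    nonsing_inv_mul _ hH, Matrix.mul_one]

theorem self_mul_constrainedInv (hH : IsUnit H.det) :
    H * constrainedInv H A = 1 - Aᵀ * (A * H⁻¹ * Aᵀ)⁻¹ * A * H⁻¹ := by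
  simp only [constrainedInv, Matrix.mul_sub, ← Matrix.mul_assoc, mul_nonsing_inv _ hH,
    Matrix.one_mul]

theorem constrainedInv_mul_compression (hA : A * Aᵀ = 1) (hH : IsUnit H.det)
    (hS : IsUnit (A * H⁻¹ * Aᵀ).det) :
    constrainedInv H A * ((1 - Aᵀ * A) * H * (1 - Aᵀ * A)) = 1 - Aᵀ * A :=
  calc constrainedInv H A * ((1 - Aᵀ * A) * H * (1 - Aᵀ * A))
      = constrainedInv H A * (1 - Aᵀ * A) * H * (1 - Aᵀ * A) := by
        simp only [Matrix.mul_assoc]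
    _ = (1 - Aᵀ * A) - H⁻¹ * Aᵀ * (A * H⁻¹ * Aᵀ)⁻¹ * (A * (1 - Aᵀ * A)) := by
      rw [constrainedInv_mul_one_sub_transpose_mul hS, constrainedInv_mul_self hH,
        Matrix.sub_mul, Matrix.one_mul, Matrix.mul_assoc _ A]
    _ = 1 - Aᵀ * A := by rw [mul_one_sub_transpose_mul hA, Matrix.mul_zero, sub_zero]

theorem compression_mul_constrainedInv (hA : A * Aᵀ = 1) (hH : IsUnit H.det)
    (hS : IsUnit (A * H⁻¹ * Aᵀ).det) :
    (1 - Aᵀ * A) * H * (1 - Aᵀ * A) * constrainedInv H A = 1 - Aᵀ * A :=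
  calc (1 - Aᵀ * A) * H * (1 - Aᵀ * A) * constrainedInv H A
      = (1 - Aᵀ * A) * (H * ((1 - Aᵀ * A) * constrainedInv H A)) := by
        simp only [Matrix.mul_assoc]
    _ = (1 - Aᵀ * A) - (1 - Aᵀ * A) * Aᵀ * ((A * H⁻¹ * Aᵀ)⁻¹ * A * H⁻¹) := by
      rw [one_sub_transpose_mul_mul_constrainedInv hS, self_mul_constrainedInv hH,
        Matrix.mul_sub, Matrix.mul_one]
      simp only [Matrix.mul_assoc]
    _ = 1 - Aᵀ * A := by
      rw [one_sub_transpose_mul_mul_transpose hA, Matrix.zero_mul, sub_zero]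

end ConstrainedInverse

theorem posDef_mul_mul_transpose_of_mul_transpose_eq_one {l m : Type*} [Fintype l]
    [DecidableEq l] [Fintype m] {H : Matrix m m ℝ} (hH : H.PosDef) {A : Matrix l m ℝ}
    (hA : A * Aᵀ = 1) : (A * H * Aᵀ).PosDef := by
  have hAinj : Function.Injective A.vecMul := fun x y hxy => by
    simpa [vecMul_vecMul, hA] using congrArg (· ᵥ* Aᵀ) hxy
  simpa [conjTranspose_eq_transpose_of_trivial] using hH.mul_mul_conjTranspose_same hAinj

/-- For `H` symmetric positive definite and `A` a matrix whose rows are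
distinct standard basis vectors, with `P = I − Aᵀ(AAᵀ)⁻¹A`,
`H⁻¹ − H⁻¹Aᵀ(AH⁻¹Aᵀ)⁻¹AH⁻¹ = (PHP)†`. -/
theorem stmt1 {n k : ℕ} (H : Matrix (Fin n) (Fin n) ℝ) (hH : H.PosDef)
    (A : Matrix (Fin k) (Fin n) ℝ) (e : Fin k → Fin n) (he : Function.Injective e)
    (hA : A = Matrix.of fun i j => if j = e i then (1 : ℝ) else 0) :
    IsMoorePenroseInv
      ((1 - Aᵀ * (A * Aᵀ)⁻¹ * A) * H * (1 - Aᵀ * (A * Aᵀ)⁻¹ * A))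
      (H⁻¹ - H⁻¹ * Aᵀ * (A * H⁻¹ * Aᵀ)⁻¹ * A * H⁻¹) := by
  have hAAt : A * Aᵀ = 1 := mul_transpose_eq_one_of_eq_of_ite he hA
  have hHdet : IsUnit H.det := hH.det_pos.ne'.isUnit
  have hSdet : IsUnit (A * H⁻¹ * Aᵀ).det :=
    (posDef_mul_mul_transpose_of_mul_transpose_eq_one hH.inv hAAt).det_pos.ne'.isUnit
  rw [hAAt, inv_one, Matrix.mul_one]
  refine .of_mul_eq_of_mul_eq (compression_mul_constrainedInv hAAt hHdet hSdet)
    (constrainedInv_mul_compression hAAt hHdet hSdet) (transpose_one_sub_transpose_mul A) ?_ ?_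
  · rw [← Matrix.mul_assoc, ← Matrix.mul_assoc, one_sub_transpose_mul_idem hAAt]
  · exact one_sub_transpose_mul_mul_constrainedInv hSdet
end

section
/- Let C be a class of subsets of a set Θ and D another class of subsets of Θ, both VC classes (i.e., each fails to shatter some finite set of cardinality bounded by its VC index). Then the class C ⊓ D = {C ∩ D : C ∈ C, D ∈ D} is also a VC class. -/
/-!
On an `n`-point set `A` with `n ≥ 2`, a class that shatters no `k`-point set has fewer than `n ^ k` traces
(Pajor's inequality bounds the traces by the shattered subsets of `A`, all of size `< k`).
Every trace of `C ⊓ D` on `A` is the intersection of a trace of `C` and a trace of `D`, so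
`C ⊓ D` has at most `n ^ (k₁ + k₂)` traces on `A`, which is less than the `2 ^ n` needed to
shatter `A` once `n` is large.
-/

open Finset

/-- A class `C` of subsets of `Θ` shatters a finite set `A` if every subset of `A`
is the intersection of `A` with some member of `C`. -/
def ShattersClass {Θ : Type*} (C : Set (Set Θ)) (A : Finset Θ) : Prop :=
  ∀ B ⊆ A, ∃ c ∈ C, (A : Set Θ) ∩ c = (B : Set Θ)

/-- `C` is a VC class if there is `k < ∞` such that `C` shatters no set of cardinality `k`. -/
def IsVCClass {Θ : Type*} (C : Set (Set Θ)) : Prop :=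
  ∃ k : ℕ, ∀ A : Finset Θ, A.card = k → ¬ ShattersClass C A

section Traces

variable {Θ : Type*} {C D : Set (Set Θ)} {A B : Finset Θ} {k : ℕ}

open Classical in
noncomputable def traces (C : Set (Set Θ)) (A : Finset Θ) : Finset (Finset Θ) :=
  A.powerset.filter fun B => ∃ c ∈ C, (A : Set Θ) ∩ c = B

lemma mem_traces : B ∈ traces C A ↔ B ⊆ A ∧ ∃ c ∈ C, (A : Set Θ) ∩ c = B := by
  classical
  simp [traces]

lemma ShattersClass.traces_eq_powerset (h : ShattersClass C A) : traces C A = A.powerset :=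
  Finset.ext fun B => by
    rw [mem_traces, mem_powerset]
    exact ⟨And.left, fun hB => ⟨hB, h B hB⟩⟩

lemma ShattersClass.mono (hBA : B ⊆ A) (h : ShattersClass C A) : ShattersClass C B := by
  intro B' hB'
  obtain ⟨c, hc, hAc⟩ := h B' (hB'.trans hBA)
  refine ⟨c, hc, ?_⟩
  rw [← Set.inter_eq_left.mpr (coe_subset.mpr hBA), Set.inter_assoc, hAc,
    Set.inter_eq_right.mpr (coe_subset.mpr hB')]

lemma ShattersClass.card_lt (hk : ∀ B : Finset Θ, #B = k → ¬ ShattersClass C B)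
    (h : ShattersClass C A) : #A < k := by
  by_contra! hkA
  obtain ⟨B, hBA, hB⟩ := exists_subset_card_eq hkA
  exact hk B hB (h.mono hBA)

lemma Finset.Shatters.subset_of_traces [DecidableEq Θ] (h : (traces C A).Shatters B) : B ⊆ A := by
  obtain ⟨u, hu, hBu⟩ := h.exists_superset
  exact hBu.trans (mem_traces.mp hu).1

lemma Finset.Shatters.shattersClass_of_traces [DecidableEq Θ] (h : (traces C A).Shatters B) : ShattersClass C B := by
  intro t ht
  obtain ⟨u, hu, hBu⟩ := h ht
  obtain ⟨-, c, hc, hAc⟩ := mem_traces.mp hu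
  refine ⟨c, hc, ?_⟩
  rw [← Set.inter_eq_left.mpr (coe_subset.mpr h.subset_of_traces), Set.inter_assoc, hAc,
    ← coe_inter, hBu]

lemma card_traces_le_sum_choose (hk : ∀ B : Finset Θ, #B = k → ¬ ShattersClass C B) :
    #(traces C A) ≤ ∑ j ∈ range k, (#A).choose j := by
  classical
  have hsub : (traces C A).shatterer ⊆ (range k).biUnion (A.powersetCard ·) := by
    intro B hB
    rw [mem_shatterer] at hB
    exact mem_biUnion.mpr ⟨#B, mem_range.mpr (hB.shattersClass_of_traces.card_lt hk),
      mem_powersetCard.mpr ⟨hB.subset_of_traces, rfl⟩⟩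
  calc #(traces C A) ≤ #(traces C A).shatterer := card_le_card_shatterer _
    _ ≤ #((range k).biUnion (A.powersetCard ·)) := card_le_card hsub
    _ ≤ ∑ j ∈ range k, #(A.powersetCard j) := card_biUnion_le
    _ = ∑ j ∈ range k, (#A).choose j := by simp only [card_powersetCard]

lemma traces_inter_subset_image₂ [DecidableEq Θ] :
    traces {s | ∃ c ∈ C, ∃ d ∈ D, s = c ∩ d} A ⊆ image₂ (· ∩ ·) (traces C A) (traces D A) := by
  classical
  intro B hB
  obtain ⟨-, _, ⟨c, hc, d, hd, rfl⟩, hAcd⟩ := mem_traces.mp hB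
  refine mem_image₂.mpr ⟨A.filter (· ∈ c), ?_, A.filter (· ∈ d), ?_, ?_⟩
  · exact mem_traces.mpr ⟨filter_subset _ _, c, hc, by ext; simp⟩
  · exact mem_traces.mpr ⟨filter_subset _ _, d, hd, by ext; simp⟩
  · apply coe_injective
    rw [coe_inter, coe_filter, coe_filter, ← hAcd]
    ext x
    simp only [Set.mem_ofPred_eq, Set.mem_inter_iff, mem_coe]
    tauto

end Traces

lemma Nat.sum_range_choose_lt_pow {n : ℕ} (hn : 2 ≤ n) (k : ℕ) :
    ∑ j ∈ range k, n.choose j < n ^ k :=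
  calc ∑ j ∈ range k, n.choose j ≤ ∑ j ∈ range k, n ^ j :=
        sum_le_sum fun j _ => Nat.choose_le_pow n j
    _ < n ^ k := Nat.geomSum_lt hn fun _ => mem_range.mp

lemma Nat.exists_pow_lt_two_pow (K : ℕ) : ∃ n : ℕ, 2 ≤ n ∧ n ^ K < 2 ^ n := by
  have hlim := tendsto_pow_const_div_const_pow_of_one_lt K (one_lt_two : (1 : ℝ) < 2)
  obtain ⟨n, hn, hlt⟩ :=
    ((Filter.eventually_ge_atTop 2).and (hlim.eventually (gt_mem_nhds one_pos))).exists
  refine ⟨n, hn, ?_⟩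
  rw [div_lt_one (by positivity)] at hlt
  exact_mod_cast hlt

/-- Pairwise intersections of two VC classes form a VC class. -/
theorem stmt4 {Θ : Type*} (C D : Set (Set Θ)) (hC : IsVCClass C) (hD : IsVCClass D) :
    IsVCClass {s | ∃ c ∈ C, ∃ d ∈ D, s = c ∩ d} := by
  classical
  obtain ⟨k₁, hk₁⟩ := hC
  obtain ⟨k₂, hk₂⟩ := hD
  obtain ⟨n, hn, hlt⟩ := Nat.exists_pow_lt_two_pow (k₁ + k₂)
  refine ⟨n, fun A hA hA_shattered => ?_⟩
  subst hA
  have hbound (E : Set (Set Θ)) (k : ℕ) (hk : ∀ B : Finset Θ, #B = k → ¬ ShattersClass E B) :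
      #(traces E A) ≤ #A ^ k :=
    (card_traces_le_sum_choose hk).trans (Nat.sum_range_choose_lt_pow hn k).le
  have : 2 ^ #A ≤ #A ^ (k₁ + k₂) :=
    calc 2 ^ #A = #(traces _ A) := by rw [hA_shattered.traces_eq_powerset, card_powerset]
      _ ≤ #(image₂ (· ∩ ·) (traces C A) (traces D A)) := card_le_card traces_inter_subset_image₂
      _ ≤ #(traces C A) * #(traces D A) := card_image₂_le _ _ _
      _ ≤ #A ^ k₁ * #A ^ k₂ := Nat.mul_le_mul (hbound C k₁ hk₁) (hbound D k₂ hk₂)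
      _ = #A ^ (k₁ + k₂) := (pow_add _ _ _).symm
  omega
end

section
/- Let (β*, p*, x*) be a limit FPPE for (b, v, s), let H(β) = E_s[max_i β_i v_i(θ)] − Σ_i b_i log β_i, and suppose H is twice continuously differentiable at β* with Hessian H (the smoothness assumption). If β*_i < 1 for all i, then for almost every θ, the price satisfies p*(θ) = (μ̄*)^T H^{-1} μ*(θ), where μ*(θ) = x*(θ) ⊙ v(θ) (elementwise product) and μ̄* = E_s[μ*(θ)]. -/
/-!
`F(β) = E[max_i β_i v_i]` is positively 1-homogeneous, so its gradient is constant along the ray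
`t ↦ t β*`, while the gradient of `Ψ(β) = Σ b_i log β_i` scales like `t⁻¹` there. Differentiating
`∇H(t β*) = ∇F(β*) - t⁻¹ ∇Ψ(β*)` at `t = 1` gives Euler's identity `𝓗 β* = ∇Ψ(β*) = (b_i / β*_i)_i`.
Since no buyer is paced at `1`, every budget is spent, which makes `b_i / β*_i = μ̄*_i`. Hence
`μ̄*ᵀ 𝓗⁻¹ μ*(θ) = β*ᵀ μ*(θ) = Σ β*_i x*_i v_i = p*(θ)`, the last step because a winning buyer pays
`β*_i v_i = p*(θ)` and items with positive price are fully allocated.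
-/

open MeasureTheory Matrix

/-- A limit first-price pacing equilibrium for budgets `b`, valuations `v`, and supply
measure `μ` (i.e. `μ = s(θ)dθ`): pacing multipliers `β ∈ (0,1]^n`, prices `p`, and
allocations `x` satisfying first-price, feasibility, and market-clearing conditions. -/
def IsFPPE {Θ : Type*} [MeasurableSpace Θ] {n : ℕ} (μ : MeasureTheory.Measure Θ)
    (b : Fin n → ℝ) (v : Fin n → Θ → ℝ) (β : Fin n → ℝ) (p : Θ → ℝ)
    (x : Fin n → Θ → ℝ) : Prop :=
  (∀ i, 0 < β i ∧ β i ≤ 1) ∧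
  (∀ θ, p θ = ⨆ i, β i * v i θ) ∧
  (∀ i θ, 0 < x i θ → β i * v i θ = p θ) ∧
  (∀ i θ, 0 ≤ x i θ ∧ x i θ ≤ 1) ∧
  (∀ i, ∫ θ, x i θ * p θ ∂μ ≤ b i) ∧
  (∀ θ, ∑ i, x i θ ≤ 1) ∧
  (∀ i, (∫ θ, x i θ * p θ ∂μ) < b i → β i = 1) ∧
  (∀ θ, 0 < p θ → ∑ i, x i θ = 1)

open Filter Topology

section

variable {E G : Type*} [NormedAddCommGroup E] [NormedSpace ℝ E]
  [NormedAddCommGroup G] [NormedSpace ℝ G]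

/-- No differentiability is needed: `F` is differentiable at `t • c` iff it is at `c`, and
otherwise both sides are `0`. -/
theorem fderiv_smul_of_homogeneous {F : E → G} (hF : ∀ t : ℝ, 0 < t → ∀ c, F (t • c) = t • F c)
    {t : ℝ} (ht : 0 < t) (c : E) : fderiv ℝ F (t • c) = fderiv ℝ F c := by
  have h := fderiv_comp_smul (f := F) (x := c) t
  simp_rw [hF t ht] at h
  rw [show (fun x => t • F x) = t • F from rfl, fderiv_const_smul_field] at h
  exact (smul_right_injective _ ht.ne' h).symm

theorem fderiv_apply_self_eq_of_hasDerivAt {g : E → G} {x : E} {L : G}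
    (hg : DifferentiableAt ℝ g x) (hL : HasDerivAt (fun t : ℝ => g (t • x)) L 1) :
    fderiv ℝ g x x = L := by
  have hray : HasDerivAt (fun t : ℝ => t • x) x 1 := by
    simpa using (hasDerivAt_id (1 : ℝ)).smul_const x
  have hcomp : HasDerivAt (fun t : ℝ => g (t • x)) (fderiv ℝ g x x) 1 :=
    HasFDerivAt.comp_hasDerivAt (l := g) 1 (by simpa using hg.hasFDerivAt) hray
  exact hcomp.unique hL

end

theorem hasFDerivAt_sum_mul_log {ι : Type*} [Fintype ι] (b : ι → ℝ) {c : ι → ℝ}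
    (hc : ∀ i, c i ≠ 0) :
    HasFDerivAt (fun c' : ι → ℝ => ∑ i, b i * Real.log (c' i))
      (∑ i, (b i / c i) • ContinuousLinearMap.proj (R := ℝ) (φ := fun _ : ι => ℝ) i) c := by
  refine HasFDerivAt.fun_sum fun i _ => ?_
  have hlog := (Real.hasDerivAt_log (hc i)).comp_hasFDerivAt c (hasFDerivAt_apply (𝕜 := ℝ) i c)
  simpa [smul_smul, div_eq_mul_inv] using hlog.const_mul (b i)

theorem fderiv_fderiv_sub_sum_mul_log_apply_self {ι : Type*} [Fintype ι] {F : (ι → ℝ) → ℝ}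
    (hF : ∀ t : ℝ, 0 < t → ∀ c, F (t • c) = t * F c) (b : ι → ℝ) {β : ι → ℝ}
    (hβ : ∀ i, β i ≠ 0) (hH : ContDiffAt ℝ 2 (fun c => F c - ∑ i, b i * Real.log (c i)) β) :
    fderiv ℝ (fderiv ℝ (fun c => F c - ∑ i, b i * Real.log (c i))) β β
      = ∑ i, (b i / β i) • ContinuousLinearMap.proj (R := ℝ) (φ := fun _ : ι => ℝ) i := by
  set Ψ' : (ι → ℝ) →L[ℝ] ℝ :=
    ∑ i, (b i / β i) • ContinuousLinearMap.proj (R := ℝ) (φ := fun _ : ι => ℝ) i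
  have hray : ∀ᶠ t : ℝ in 𝓝 1,
      0 < t ∧ DifferentiableAt ℝ (fun c => F c - ∑ i, b i * Real.log (c i)) (t • β) := by
    have hcont : Tendsto (fun t : ℝ => t • β) (𝓝 1) (𝓝 β) :=
      (continuous_id.smul continuous_const).tendsto' 1 β (one_smul ℝ β)
    filter_upwards [Ioi_mem_nhds one_pos, hcont.eventually (hH.eventually (by simp))]
      with t ht hHt
    exact ⟨ht, hHt.differentiableAt (by simp)⟩
  have hcurve : (fun t : ℝ => fderiv ℝ (fun c => F c - ∑ i, b i * Real.log (c i)) (t • β))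
      =ᶠ[𝓝 1] fun t => fderiv ℝ F β - t⁻¹ • Ψ' := by
    filter_upwards [hray] with t ⟨ht, hHt⟩
    have hΨ : HasFDerivAt (fun c : ι → ℝ => ∑ i, b i * Real.log (c i)) (t⁻¹ • Ψ') (t • β) := by
      have hscale : ∑ i, (b i / (t • β) i) •
          ContinuousLinearMap.proj (R := ℝ) (φ := fun _ : ι => ℝ) i = t⁻¹ • Ψ' := by
        simp only [Ψ', Finset.smul_sum, smul_smul, Pi.smul_apply, smul_eq_mul]
        refine Finset.sum_congr rfl fun i _ => ?_
        rw [div_mul_eq_div_div_swap, div_eq_inv_mul]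
      simpa only [hscale] using
        hasFDerivAt_sum_mul_log b (c := t • β) (fun i => by simp [ht.ne', hβ i])
    have hFt : DifferentiableAt ℝ F (t • β) := by
      simpa using hHt.fun_add hΨ.differentiableAt
    rw [fderiv_fun_sub hFt hΨ.differentiableAt, hΨ.fderiv,
      fderiv_smul_of_homogeneous (fun s hs c => by rw [hF s hs c, smul_eq_mul]) ht]
  have hderiv : HasDerivAt (fun t : ℝ => fderiv ℝ F β - t⁻¹ • Ψ') Ψ' 1 := by
    simpa using ((hasDerivAt_inv (one_ne_zero (α := ℝ))).smul_const Ψ').const_sub (fderiv ℝ F β)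
  exact fderiv_apply_self_eq_of_hasDerivAt
    ((hH.fderiv_right (m := 1) (by norm_num)).differentiableAt (by norm_num))
    (hderiv.congr_of_eventuallyEq hcurve)

theorem integral_iSup_smul_mul {Θ ι : Type*} [MeasurableSpace Θ] (μ : Measure Θ)
    (v : ι → Θ → ℝ) {t : ℝ} (ht : 0 ≤ t) (c : ι → ℝ) :
    ∫ θ, (⨆ i, (t • c) i * v i θ) ∂μ = t * ∫ θ, (⨆ i, c i * v i θ) ∂μ := by
  simp_rw [Pi.smul_apply, smul_eq_mul, mul_assoc, ← Real.mul_iSup_of_nonneg ht]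
  exact integral_const_mul t _

namespace IsFPPE

variable {Θ : Type*} [MeasurableSpace Θ] {n : ℕ} {μ : Measure Θ} {b : Fin n → ℝ}
  {v : Fin n → Θ → ℝ} {β : Fin n → ℝ} {p : Θ → ℝ} {x : Fin n → Θ → ℝ}

theorem mul_price_eq (h : IsFPPE μ b v β p x) (i : Fin n) (θ : Θ) :
    x i θ * p θ = β i * (x i θ * v i θ) := by
  obtain ⟨-, -, hwin, hx, -⟩ := h
  rcases (hx i θ).1.lt_or_eq with hpos | hzero
  · rw [← hwin i θ hpos]; ring
  · rw [← hzero]; ring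

theorem price_eq_dotProduct (h : IsFPPE μ b v β p x) (hv : ∀ i θ, 0 ≤ v i θ) (θ : Θ) :
    p θ = β ⬝ᵥ fun i => x i θ * v i θ := by
  simp only [dotProduct, ← h.mul_price_eq]
  rw [← Finset.sum_mul]
  obtain ⟨hβ, hprice, -, -, -, -, -, hclear⟩ := h
  have hp : 0 ≤ p θ := hprice θ ▸ Real.iSup_nonneg fun i => mul_nonneg (hβ i).1.le (hv i θ)
  rcases hp.lt_or_eq with hpos | hzero
  · rw [hclear θ hpos, one_mul]
  · rw [← hzero, mul_zero]

theorem integral_mul_valuation_eq (h : IsFPPE μ b v β p x) {i : Fin n} (hi : β i < 1) :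
    ∫ θ, x i θ * v i θ ∂μ = b i / β i := by
  rw [eq_div_iff (h.1 i).1.ne', mul_comm, ← integral_const_mul]
  simp_rw [← h.mul_price_eq]
  obtain ⟨-, -, -, -, hbudget, -, hunpaced, -⟩ := h
  exact (hbudget i).eq_of_not_lt fun hlt => hi.ne (hunpaced i hlt)

end IsFPPE

theorem stmt8_general {Θ : Type*} [MeasurableSpace Θ] {n : ℕ} (μ : Measure Θ)
    (b : Fin n → ℝ) (v : Fin n → Θ → ℝ) (β : Fin n → ℝ) (p : Θ → ℝ)
    (x : Fin n → Θ → ℝ)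
    (hv : ∀ i θ, 0 ≤ v i θ)
    (hfppe : IsFPPE μ b v β p x)
    (𝓗 : Matrix (Fin n) (Fin n) ℝ)
    (hsmooth : ContDiffAt ℝ 2
      (fun β' : Fin n → ℝ =>
        (∫ θ, (⨆ i, β' i * v i θ) ∂μ) - ∑ i, b i * Real.log (β' i)) β)
    (hHess : ∀ y z : Fin n → ℝ,
      fderiv ℝ (fderiv ℝ (fun β' : Fin n → ℝ =>
        (∫ θ, (⨆ i, β' i * v i θ) ∂μ) - ∑ i, b i * Real.log (β' i))) β y z
        = y ⬝ᵥ 𝓗.mulVec z)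
    (hHinv : IsUnit 𝓗.det)
    (hβlt : ∀ i, β i < 1) :
    ∀ᵐ θ ∂μ,
      p θ = (fun i => ∫ θ', x i θ' * v i θ' ∂μ) ⬝ᵥ 𝓗⁻¹.mulVec (fun i => x i θ * v i θ) := by
  have hEuler := fderiv_fderiv_sub_sum_mul_log_apply_self
    (F := fun c => ∫ θ, (⨆ i, c i * v i θ) ∂μ) (fun t ht c => integral_iSup_smul_mul μ v ht.le c)
    b (fun i => (hfppe.1 i).1.ne') hsmooth
  have hrow : β ᵥ* 𝓗 = fun i => ∫ θ, x i θ * v i θ ∂μ := by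
    funext j
    have hj := hHess β (Pi.single j 1)
    rw [hEuler, dotProduct_mulVec] at hj
    simpa [hfppe.integral_mul_valuation_eq (hβlt j), Pi.single_apply] using hj.symm
  refine Eventually.of_forall fun θ => ?_
  rw [← hrow, dotProduct_mulVec, vecMul_vecMul, mul_nonsing_inv _ hHinv, vecMul_one]
  exact hfppe.price_eq_dotProduct hv θ

/-- In a limit FPPE with dual objective
`H(β) = E[max_i β_i v_i(θ)] − Σ b_i log β_i` twice continuously differentiable at `β*`
with Hessian matrix `𝓗`, if `β*_i < 1` for all `i` then a.e. `p*(θ) = μ̄*ᵀ 𝓗⁻¹ μ*(θ)`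
where `μ*(θ) = x*(θ) ⊙ v(θ)` and `μ̄* = E[μ*(θ)]`. -/
theorem stmt8 {Θ : Type*} [MeasurableSpace Θ] {n : ℕ} [NeZero n] (μ : Measure Θ)
    [IsProbabilityMeasure μ]
    (b : Fin n → ℝ) (v : Fin n → Θ → ℝ) (β : Fin n → ℝ) (p : Θ → ℝ)
    (x : Fin n → Θ → ℝ)
    (hb : ∀ i, 0 < b i) (hv : ∀ i θ, 0 ≤ v i θ)
    (hfppe : IsFPPE μ b v β p x)
    (𝓗 : Matrix (Fin n) (Fin n) ℝ)
    (hsmooth : ContDiffAt ℝ 2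
      (fun β' : Fin n → ℝ =>
        (∫ θ, (⨆ i, β' i * v i θ) ∂μ) - ∑ i, b i * Real.log (β' i)) β)
    (hHess : ∀ y z : Fin n → ℝ,
      fderiv ℝ (fderiv ℝ (fun β' : Fin n → ℝ =>
        (∫ θ, (⨆ i, β' i * v i θ) ∂μ) - ∑ i, b i * Real.log (β' i))) β y z
        = y ⬝ᵥ 𝓗.mulVec z)
    (hHinv : IsUnit 𝓗.det)
    (hβlt : ∀ i, β i < 1) :
    ∀ᵐ θ ∂μ,
      p θ = (fun i => ∫ θ', x i θ' * v i θ' ∂μ) ⬝ᵥ 𝓗⁻¹.mulVec (fun i => x i θ * v i θ) :=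
  stmt8_general μ b v β p x hv hfppe 𝓗 hsmooth hHess hHinv hβlt
end

section
/- In any limit FPPE, each buyer's allocation maximizes their quasilinear utility among budget-feasible allocations: for all i, x*_i ∈ argmax { ⟨v_i, s x⟩ + (b_i − ⟨p*, s x⟩) : x ∈ L^∞, 0 ≤ x ≤ 1, ⟨p*, s x⟩ ≤ b_i }. -/
/-!
The first-price condition gives `β_i v_i ≤ p*` pointwise, with equality wherever `x*_i > 0`.
Hence `β_i` times buyer `i`'s surplus `⟨v_i, s x'⟩ - ⟨p*, s x'⟩` from any bundle `x'` is at most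
`(1 - β_i) ⟨p*, s x'⟩ ≤ (1 - β_i) b_i`, while for `x*_i` it equals `(1 - β_i) ⟨p*, s x*_i⟩`,
which is `(1 - β_i) b_i` by complementary slackness between the budget and `β_i ≤ 1`.
-/

open MeasureTheory

lemma add_sub_le_add_sub_of_pacing {β b V P V' P' : ℝ} (hβ₀ : 0 < β) (hβ₁ : β ≤ 1)
    (hV : β * V = P) (hV' : β * V' ≤ P') (hP' : P' ≤ b)
    (hslack : (1 - β) * P = (1 - β) * b) :
    V' + (b - P') ≤ V + (b - P) := by
  have hsurplus : β * (V' - P') ≤ β * (V - P) :=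
    calc β * (V' - P') ≤ (1 - β) * P' := by linarith
      _ ≤ (1 - β) * b := mul_le_mul_of_nonneg_left hP' (by linarith)
      _ = β * (V - P) := by linarith
  linarith [le_of_mul_le_mul_left hsurplus hβ₀]

namespace IsFPPE

variable {Θ : Type*} [MeasurableSpace Θ] {n : ℕ} {μ : Measure Θ} {b : Fin n → ℝ}
  {v : Fin n → Θ → ℝ} {β : Fin n → ℝ} {p : Θ → ℝ} {x : Fin n → Θ → ℝ}

lemma pacing_pos (h : IsFPPE μ b v β p x) (i : Fin n) : 0 < β i := (h.1 i).1

lemma pacing_le_one (h : IsFPPE μ b v β p x) (i : Fin n) : β i ≤ 1 := (h.1 i).2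

lemma paced_value_le_price (h : IsFPPE μ b v β p x) (i : Fin n) (θ : Θ) :
    β i * v i θ ≤ p θ := by
  rw [h.2.1 θ]
  exact le_ciSup (f := fun j => β j * v j θ) (Set.finite_range _).bddAbove i

lemma paced_value_mul_alloc (h : IsFPPE μ b v β p x) (i : Fin n) (θ : Θ) :
    β i * v i θ * x i θ = p θ * x i θ := by
  rcases (h.2.2.2.1 i θ).1.eq_or_lt with hzero | hpos
  · rw [← hzero, mul_zero, mul_zero]
  · rw [h.2.2.1 i θ hpos]

lemma one_sub_pacing_mul_spend (h : IsFPPE μ b v β p x) (i : Fin n) :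
    (1 - β i) * ∫ θ, p θ * x i θ ∂μ = (1 - β i) * b i := by
  simp_rw [mul_comm (p _)]
  rcases (h.2.2.2.2.1 i).lt_or_eq with hunder | hspent
  · rw [h.2.2.2.2.2.2.1 i hunder, sub_self, zero_mul, zero_mul]
  · rw [hspent]

lemma pacing_mul_integral_value (h : IsFPPE μ b v β p x) (i : Fin n) :
    β i * ∫ θ, v i θ * x i θ ∂μ = ∫ θ, p θ * x i θ ∂μ := by
  rw [← integral_const_mul]
  congr 1 with θ
  rw [← mul_assoc, h.paced_value_mul_alloc]

lemma pacing_mul_integral_value_le (h : IsFPPE μ b v β p x) (i : Fin n) {x' : Θ → ℝ}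
    (hx' : ∀ θ, 0 ≤ x' θ) (hv : Integrable (fun θ => v i θ * x' θ) μ)
    (hp : Integrable (fun θ => p θ * x' θ) μ) :
    β i * ∫ θ, v i θ * x' θ ∂μ ≤ ∫ θ, p θ * x' θ ∂μ := by
  rw [← integral_const_mul]
  refine integral_mono (hv.const_mul _) hp fun θ => ?_
  rw [← mul_assoc]
  exact mul_le_mul_of_nonneg_right (h.paced_value_le_price i θ) (hx' θ)

end IsFPPE

theorem stmt14_general {Θ : Type*} [MeasurableSpace Θ] {n : ℕ} (μ : Measure Θ)
    (b : Fin n → ℝ) (v : Fin n → Θ → ℝ) (β : Fin n → ℝ) (p : Θ → ℝ)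
    (x : Fin n → Θ → ℝ)
    (hfppe : IsFPPE μ b v β p x) :
    ∀ i, ∀ x' : Θ → ℝ, (∀ θ, 0 ≤ x' θ ∧ x' θ ≤ 1) →
      Integrable (fun θ => v i θ * x' θ) μ → Integrable (fun θ => p θ * x' θ) μ →
      (∫ θ, p θ * x' θ ∂μ) ≤ b i →
      (∫ θ, v i θ * x' θ ∂μ) + (b i - ∫ θ, p θ * x' θ ∂μ) ≤
        (∫ θ, v i θ * x i θ ∂μ) + (b i - ∫ θ, p θ * x i θ ∂μ) := by
  intro i x' hx' hv' hp' hbudget'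
  exact add_sub_le_add_sub_of_pacing (hfppe.pacing_pos i) (hfppe.pacing_le_one i)
    (hfppe.pacing_mul_integral_value i)
    (hfppe.pacing_mul_integral_value_le i (fun θ => (hx' θ).1) hv' hp') hbudget'
    (hfppe.one_sub_pacing_mul_spend i)

/-- In any limit FPPE, each buyer's allocation maximizes their quasilinear
utility `⟨v_i, s x⟩ + (b_i − ⟨p*, s x⟩)` among budget-feasible allocations `0 ≤ x ≤ 1`
with `⟨p*, s x⟩ ≤ b_i`. -/
theorem stmt14 {Θ : Type*} [MeasurableSpace Θ] {n : ℕ} (μ : Measure Θ)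
    [IsProbabilityMeasure μ]
    (b : Fin n → ℝ) (v : Fin n → Θ → ℝ) (β : Fin n → ℝ) (p : Θ → ℝ)
    (x : Fin n → Θ → ℝ)
    (hb : ∀ i, 0 < b i) (hv : ∀ i θ, 0 ≤ v i θ)
    (hintv : ∀ i, Integrable (fun θ => v i θ * x i θ) μ)
    (hintp : ∀ i, Integrable (fun θ => p θ * x i θ) μ)
    (hfppe : IsFPPE μ b v β p x) :
    ∀ i, ∀ x' : Θ → ℝ, (∀ θ, 0 ≤ x' θ ∧ x' θ ≤ 1) →
      Integrable (fun θ => v i θ * x' θ) μ → Integrable (fun θ => p θ * x' θ) μ →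
      (∫ θ, p θ * x' θ ∂μ) ≤ b i →
      (∫ θ, v i θ * x' θ ∂μ) + (b i - ∫ θ, p θ * x' θ ∂μ) ≤
        (∫ θ, v i θ * x i θ ∂μ) + (b i - ∫ θ, p θ * x i θ ∂μ) :=
  stmt14_general μ b v β p x hfppe
end
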